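/- For the defeasible theory D consisting solely of the rule r₁: p ⇒ p, neither D ⊢ +∂p nor D ⊢ -∂p holds; hence p is defeasibly unknowable and D is not complete. -/

import Mathlib

/-! Core: propositional Defeasible Logic (proof theory via derivations) -/

/-- Literals: positive or negative atoms. -/
inductive Lit : Type
  | pos : ℕ → Lit
  | neg : ℕ → Lit
deriving DecidableEq, Repr

/-- The complement `~q` of a literal. -/
def Lit.compl : Lit → Lit
  | .pos n => .neg n
  | .neg n => .pos n

/-- The three kinds of rules in a defeasible theory. -/
inductive RuleKind : Type
  | strict | defeasible | defeater
deriving DecidableEq, Repr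

/-- A rule with a unique label (name), kind, antecedent and literal head. -/
structure DLRule : Type where
  name : ℕ
  kind : RuleKind
  ante : List Lit
  head : Lit
deriving DecidableEq, Repr

/-- A (finite, propositional) defeasible theory `D = (F, R, >)`. -/
structure DTheory : Type where
  facts : Finset Lit
  rules : Finset DLRule
  sup : DLRule → DLRule → Prop

/-- The four proof tags `+Δ`, `-Δ`, `+∂`, `-∂`. -/
inductive Tag : Type
  | pDelta | mDelta | pPartial | mPartial
deriving DecidableEq, Repr

/-- A tagged literal (a conclusion). -/
abbrev TaggedLit := Tag × Lit

/-- The inference conditions of Defeasible Logic: the tagged literal `c` may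
be appended to a derivation whose earlier lines are `prev`. -/
def ValidLine (D : DTheory) (prev : List TaggedLit) : TaggedLit → Prop
  | (Tag.pDelta, q) =>
      q ∈ D.facts ∨
      ∃ r ∈ D.rules, r.kind = RuleKind.strict ∧ r.head = q ∧
        ∀ a ∈ r.ante, (Tag.pDelta, a) ∈ prev
  | (Tag.mDelta, q) =>
      q ∉ D.facts ∧
      ∀ r ∈ D.rules, r.kind = RuleKind.strict → r.head = q →
        ∃ a ∈ r.ante, (Tag.mDelta, a) ∈ prev
  | (Tag.pPartial, q) =>
      (Tag.pDelta, q) ∈ prev ∨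
      ((∃ r ∈ D.rules, r.kind ≠ RuleKind.defeater ∧ r.head = q ∧
          ∀ a ∈ r.ante, (Tag.pPartial, a) ∈ prev) ∧
       (Tag.mDelta, q.compl) ∈ prev ∧
       ∀ s ∈ D.rules, s.head = q.compl →
         (∃ a ∈ s.ante, (Tag.mPartial, a) ∈ prev) ∨
         (∃ t ∈ D.rules, t.kind ≠ RuleKind.defeater ∧ t.head = q ∧
           (∀ a ∈ t.ante, (Tag.pPartial, a) ∈ prev) ∧ D.sup t s))
  | (Tag.mPartial, q) =>
      (Tag.mDelta, q) ∈ prev ∧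
      ((∀ r ∈ D.rules, r.kind ≠ RuleKind.defeater → r.head = q →
          ∃ a ∈ r.ante, (Tag.mPartial, a) ∈ prev) ∨
       (Tag.pDelta, q.compl) ∈ prev ∨
       (∃ s ∈ D.rules, s.head = q.compl ∧
          (∀ a ∈ s.ante, (Tag.pPartial, a) ∈ prev) ∧
          ∀ t ∈ D.rules, t.kind ≠ RuleKind.defeater → t.head = q →
            (∃ a ∈ t.ante, (Tag.mPartial, a) ∈ prev) ∨ ¬ D.sup t s))

/-- `P` is a derivation in `D`: a finite sequence of tagged literals each of
which satisfies the inference conditions w.r.t. the earlier lines. -/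
def IsDerivation (D : DTheory) (P : List TaggedLit) : Prop :=
  ∀ (i : ℕ) (h : i < P.length), ValidLine D (P.take i) (P.get ⟨i, h⟩)

/-- `D ⊢ (t, q)` : the tagged literal is a line of some derivation in `D`. -/
def Proves (D : DTheory) (t : Tag) (q : Lit) : Prop :=
  ∃ P : List TaggedLit, IsDerivation D P ∧ (t, q) ∈ P

/-- `D ⊢ +Δ q`. -/
abbrev PDelta (D : DTheory) (q : Lit) : Prop := Proves D Tag.pDelta q
/-- `D ⊢ -Δ q`. -/
abbrev MDelta (D : DTheory) (q : Lit) : Prop := Proves D Tag.mDelta q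
/-- `D ⊢ +∂ q`. -/
abbrev PPartial (D : DTheory) (q : Lit) : Prop := Proves D Tag.pPartial q
/-- `D ⊢ -∂ q`. -/
abbrev MPartial (D : DTheory) (q : Lit) : Prop := Proves D Tag.mPartial q

/-- `q` is strictly unknowable in `D`. -/
def StrictlyUnknowable (D : DTheory) (q : Lit) : Prop := ¬ PDelta D q ∧ ¬ MDelta D q

/-- `q` is defeasibly unknowable in `D`. -/
def DefeasiblyUnknowable (D : DTheory) (q : Lit) : Prop := ¬ PPartial D q ∧ ¬ MPartial D q

/-- `q` is unknowable in `D`. -/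
def Unknowable (D : DTheory) (q : Lit) : Prop :=
  StrictlyUnknowable D q ∨ DefeasiblyUnknowable D q

/-- The point `{q, ~q}` of the dependency graph corresponding to a literal `q`. -/
def Lit.pt (q : Lit) : Set Lit := {q, q.compl}

/-- Arc of the dependency graph `DG(D)` from point `{b,~b}` to point `{a,~a}`:
there is a strict or defeasible rule whose head is in `{b,~b}` and some antecedent
in `{a,~a}`.  (Stated on representative literals; it is complement-invariant.) -/
def DepArc (D : DTheory) (b a : Lit) : Prop :=
  ∃ r ∈ D.rules, r.kind ≠ RuleKind.defeater ∧
    (r.head = b ∨ r.head = b.compl) ∧ (a ∈ r.ante ∨ a.compl ∈ r.ante)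

/-- `D` is decisive iff its dependency graph is acyclic. -/
def Decisive (D : DTheory) : Prop := ∀ q : Lit, ¬ Relation.TransGen (DepArc D) q q

/-- The theory consisting solely of the rule `r₁ : p ⇒ p`. -/
def Dself : DTheory :=
  ⟨∅, {⟨1, RuleKind.defeasible, [Lit.pos 0], Lit.pos 0⟩}, fun _ _ => False⟩

/-! With no facts and no strict rules, no `+Δ` line is ever valid. Through the antecedent of
`p ⇒ p`, a line `+∂p` needs an earlier `+Δp` or `+∂p`, and a line `-∂p` an earlier `-∂p` or
`+Δ~p`. So no derivation can contain a first line among `+Δ _`, `+∂p`, `-∂p`. -/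

theorem IsDerivation.take {D : DTheory} {P : List TaggedLit} (hP : IsDerivation D P) (n : ℕ) :
    IsDerivation D (P.take n) := by
  intro i hi
  have hiP : i < P.length := (List.length_take_le' n P).trans_lt' hi
  have hin : i < n := by rw [List.length_take] at hi; omega
  simpa [List.take_take, Nat.min_eq_left hin.le] using hP i hiP

theorem IsDerivation.forall_mem_of_validLine {D : DTheory} {S : TaggedLit → Prop}
    (hS : ∀ prev c, (∀ d ∈ prev, S d) → ValidLine D prev c → S c)
    {P : List TaggedLit} (hP : IsDerivation D P) : ∀ c ∈ P, S c := by
  induction P using List.reverseRecOn with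
  | nil => simp
  | append_singleton P c ih =>
    have hPc := hP P.length (by simp)
    have hP' : IsDerivation D P := by simpa using hP.take P.length
    simp only [List.take_left', List.get_eq_getElem, List.getElem_concat_length] at hPc
    have hSP := ih hP'
    rw [List.forall_mem_append, List.forall_mem_singleton]
    exact ⟨hSP, hS P c hSP hPc⟩

namespace Dself

def Admissible (c : TaggedLit) : Prop :=
  c.1 ≠ Tag.pDelta ∧ c ≠ (Tag.pPartial, Lit.pos 0) ∧ c ≠ (Tag.mPartial, Lit.pos 0)

theorem not_validLine_pDelta (prev : List TaggedLit) (q : Lit) :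
    ¬ ValidLine Dself prev (Tag.pDelta, q) := by
  simp [ValidLine, Dself]

theorem validLine_pPartial_pos_zero {prev : List TaggedLit}
    (h : ValidLine Dself prev (Tag.pPartial, Lit.pos 0)) :
    (Tag.pDelta, Lit.pos 0) ∈ prev ∨ (Tag.pPartial, Lit.pos 0) ∈ prev := by
  rcases h with hdelta | ⟨⟨r, hr, -, -, hante⟩, -⟩
  · exact Or.inl hdelta
  · rw [Dself, Finset.mem_singleton] at hr
    subst hr
    exact Or.inr (hante _ (List.mem_singleton_self _))

theorem validLine_mPartial_pos_zero {prev : List TaggedLit}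
    (h : ValidLine Dself prev (Tag.mPartial, Lit.pos 0)) :
    (Tag.mPartial, Lit.pos 0) ∈ prev ∨ (Tag.pDelta, Lit.neg 0) ∈ prev := by
  obtain ⟨-, hunsupported | hdelta | ⟨s, hs, hhead, -⟩⟩ := h
  · obtain ⟨a, ha, hmem⟩ := hunsupported _ (Finset.mem_singleton_self _) (by decide) rfl
    rw [List.mem_singleton] at ha
    exact Or.inl (ha ▸ hmem)
  · exact Or.inr hdelta
  · rw [Dself, Finset.mem_singleton] at hs
    subst hs
    cases hhead

theorem admissible_of_validLine (prev : List TaggedLit) (c : TaggedLit)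
    (hprev : ∀ d ∈ prev, Admissible d) (hc : ValidLine Dself prev c) : Admissible c := by
  obtain ⟨t, q⟩ := c
  refine ⟨?_, ?_, ?_⟩
  · rintro rfl
    exact not_validLine_pDelta prev q hc
  · rintro ⟨⟩
    rcases validLine_pPartial_pos_zero hc with h | h
    · exact (hprev _ h).1 rfl
    · exact (hprev _ h).2.1 rfl
  · rintro ⟨⟩
    rcases validLine_mPartial_pos_zero hc with h | h
    · exact (hprev _ h).2.2 rfl
    · exact (hprev _ h).1 rfl

theorem admissible_of_proves {t : Tag} {q : Lit} (h : Proves Dself t q) : Admissible (t, q) :=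
  let ⟨_, hP, hmem⟩ := h
  hP.forall_mem_of_validLine admissible_of_validLine _ hmem

end Dself

/-- for `Dself`, neither `+∂p` nor `-∂p` is provable; `p` is
defeasibly unknowable and `Dself` is not complete. -/
theorem self_loop_incomplete :
    ¬ PPartial Dself (Lit.pos 0) ∧ ¬ MPartial Dself (Lit.pos 0) ∧
    DefeasiblyUnknowable Dself (Lit.pos 0) := by
  have hp : ¬ PPartial Dself (Lit.pos 0) := fun h => (Dself.admissible_of_proves h).2.1 rfl
  have hm : ¬ MPartial Dself (Lit.pos 0) := fun h => (Dself.admissible_of_proves h).2.2 rfl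
  exact ⟨hp, hm, hp, hm⟩
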